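/- arXiv:1604.07214 — 5 statements merged into one kernel-verified Lean document; each statement's English description precedes it below -/
import Mathlib

section
/- Let p > 1 be an integer and x^1, ..., x^m non-negative integers with tuple (x^1,...,x^m), and let y^1,...,y^m be non-negative integers with y^i ≤ x^i for all i and (y^1,...,y^m) ≠ (x^1,...,x^m). Let N = min over i of ord_p(x^i - y^i) (with ord_p(0) = ∞). Then ord_p((x^1 ⊕_p ⋯ ⊕_p x^m) - (y^1 ⊕_p ⋯ ⊕_p y^m)) ≥ N, with equality if and only if ord_p(∑_i (x^i - y^i)) = N. -/
/-- The `L`-th digit of `x` in base `p`. -/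
def digit (p L x : ℕ) : ℕ := x / p ^ L % p

/-- `p`-ary addition without carry of a finite family: the `L`-th `p`-ary digit
is the sum of the `L`-th digits mod `p` (iterated `⊕_p`). -/
def oplusSum {ι : Type*} (p : ℕ) (s : Finset ι) (f : ι → ℕ) : ℕ :=
  ∑ L ∈ Finset.range (∑ i ∈ s, f i + 1), (∑ i ∈ s, digit p L (f i)) % p * p ^ L

/-- `p`-adic order of a natural number, with `ord 0 = ∞`. -/
noncomputable def ordE (p x : ℕ) : ℕ∞ := if x = 0 then ⊤ else (padicValNat p x : ℕ∞)

/-- `p`-adic order of an integer, with `ord 0 = ∞`. -/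
noncomputable def ordZ (p : ℕ) (x : ℤ) : ℕ∞ := if x = 0 then ⊤ else (padicValInt p x : ℕ∞)

/-!
Let `N = n` and write `x^i = y^i + p^n d^i`. Then `x^i` and `y^i` share their `p`-ary digits
below `n`, hence so do the two `⊕_p`-sums, i.e. they are congruent mod `p^n`. The `n`-th digit
of a `⊕_p`-sum is the sum of the `n`-th digits mod `p`, and the `n`-th digit of `x^i` exceeds
that of `y^i` by `d^i` mod `p`. So the two `⊕_p`-sums are congruent mod `p^(n+1)` iff
`p ∣ ∑ d^i`, iff `p^(n+1) ∣ ∑ (x^i - y^i)`.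
-/

open Finset

section Digits

variable {p : ℕ}

lemma digit_zero (x : ℕ) : digit p 0 x = x % p := by
  simp [digit]

lemma digit_succ (n x : ℕ) : digit p (n + 1) x = digit p n (x / p) := by
  rw [digit, digit, Nat.div_div_eq_div_mul, pow_succ']

lemma digit_eq_zero_of_lt_pow {n x : ℕ} (h : x < p ^ n) : digit p n x = 0 := by
  simp [digit, Nat.div_eq_of_lt h]

lemma mod_pow_succ_eq_digit (n x : ℕ) : x % p ^ (n + 1) = p ^ n * digit p n x + x % p ^ n := by
  rw [digit, ← Nat.mod_mul_right_div_self, ← pow_succ,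
    ← Nat.mod_mod_of_dvd x (pow_dvd_pow p n.le_succ), Nat.div_add_mod]

theorem modEq_pow_succ_iff (hp : 0 < p) {a b n : ℕ} :
    a ≡ b [MOD p ^ (n + 1)] ↔ a ≡ b [MOD p ^ n] ∧ digit p n a = digit p n b := by
  refine ⟨fun h => ?_, fun ⟨h, hd⟩ => ?_⟩
  · have hn : a ≡ b [MOD p ^ n] := h.of_dvd (pow_dvd_pow p n.le_succ)
    refine ⟨hn, Nat.eq_of_mul_eq_mul_left (pow_pos hp n) ?_⟩
    rwa [Nat.ModEq, mod_pow_succ_eq_digit, mod_pow_succ_eq_digit, hn, add_left_inj] at h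
  · rw [Nat.ModEq, mod_pow_succ_eq_digit, mod_pow_succ_eq_digit, h, hd]

theorem modEq_pow_iff_forall_digit_eq (hp : 0 < p) {a b n : ℕ} :
    a ≡ b [MOD p ^ n] ↔ ∀ L < n, digit p L a = digit p L b := by
  induction n with
  | zero => simp [Nat.modEq_one]
  | succ n ih => rw [modEq_pow_succ_iff hp, ih, Nat.forall_lt_succ_right]

theorem digit_sum_range_mul_pow {t : ℕ → ℕ} (ht : ∀ L, t L < p) {M : ℕ}
    (hM : ∀ L, M ≤ L → t L = 0) (n : ℕ) :
    digit p n (∑ L ∈ range M, t L * p ^ L) = t n := by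
  induction M generalizing t n with
  | zero => simp [digit, hM n n.zero_le]
  | succ M ih =>
    have hsplit : ∑ L ∈ range (M + 1), t L * p ^ L
        = t 0 + p * ∑ L ∈ range M, t (L + 1) * p ^ L := by
      rw [sum_range_succ', mul_sum, add_comm]
      simp only [pow_succ', pow_zero, mul_one, mul_left_comm]
    cases n with
    | zero => rw [digit_zero, hsplit, Nat.add_mul_mod_self_left, Nat.mod_eq_of_lt (ht 0)]
    | succ n =>
      rw [digit_succ, hsplit, Nat.add_mul_div_left _ _ ((Nat.zero_le _).trans_lt (ht 0)),
        Nat.div_eq_of_lt (ht 0), zero_add]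
      exact ih (fun L => ht _) (fun L hL => hM _ (by omega)) n

end Digits

section OplusSum

variable {ι : Type*} {p : ℕ}

theorem digit_oplusSum (hp : 1 < p) (s : Finset ι) (f : ι → ℕ) (L : ℕ) :
    digit p L (oplusSum p s f) = (∑ i ∈ s, digit p L (f i)) % p := by
  refine digit_sum_range_mul_pow (fun L => Nat.mod_lt _ (by omega)) (fun L hL => ?_) L
  rw [sum_eq_zero fun i hi => digit_eq_zero_of_lt_pow ?_, Nat.zero_mod]
  calc f i ≤ ∑ j ∈ s, f j := single_le_sum (fun j _ => Nat.zero_le _) hi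
    _ < L := hL
    _ < p ^ L := Nat.lt_pow_self hp

theorem oplusSum_modEq_pow (hp : 1 < p) (s : Finset ι) {f g : ι → ℕ} {n : ℕ}
    (h : ∀ i ∈ s, f i ≡ g i [MOD p ^ n]) :
    oplusSum p s f ≡ oplusSum p s g [MOD p ^ n] := by
  rw [modEq_pow_iff_forall_digit_eq (by omega)]
  intro L hL
  rw [digit_oplusSum hp, digit_oplusSum hp,
    sum_congr rfl fun i hi => (modEq_pow_iff_forall_digit_eq (by omega)).1 (h i hi) L hL]

theorem digit_oplusSum_eq_iff (hp : 1 < p) (s : Finset ι) {f g d : ι → ℕ} {n : ℕ}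
    (h : ∀ i ∈ s, f i = g i + p ^ n * d i) :
    digit p n (oplusSum p s f) = digit p n (oplusSum p s g) ↔ p ∣ ∑ i ∈ s, d i := by
  have hdigit : ∀ i ∈ s, (digit p n (f i) : ZMod p) = digit p n (g i) + d i := by
    intro i hi
    rw [digit, digit, ZMod.natCast_mod, ZMod.natCast_mod, h i hi,
      Nat.add_mul_div_left _ _ (by positivity), Nat.cast_add]
  rw [digit_oplusSum hp, digit_oplusSum hp, ← ZMod.natCast_eq_natCast_iff', Nat.cast_sum,
    Nat.cast_sum, sum_congr rfl hdigit, sum_add_distrib, add_eq_left, ← Nat.cast_sum,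
    ZMod.natCast_eq_zero_iff]

theorem oplusSum_modEq_pow_succ_iff (hp : 1 < p) (s : Finset ι) {f g d : ι → ℕ} {n : ℕ}
    (h : ∀ i ∈ s, f i = g i + p ^ n * d i) :
    oplusSum p s f ≡ oplusSum p s g [MOD p ^ (n + 1)] ↔ p ∣ ∑ i ∈ s, d i := by
  rw [modEq_pow_succ_iff (by omega), digit_oplusSum_eq_iff hp s h, and_iff_right_iff_imp]
  intro _
  refine oplusSum_modEq_pow hp s fun i hi => ?_
  rw [h i hi, Nat.ModEq, Nat.add_mul_mod_self_left]

end OplusSum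

theorem ordE_eq_emultiplicity {p : ℕ} (hp : p ≠ 1) (x : ℕ) : ordE p x = emultiplicity p x := by
  unfold ordE
  split_ifs with hx
  · rw [hx, emultiplicity_zero]
  · exact padicValNat_eq_emultiplicity_of_ne_one hp hx

theorem ordZ_eq_emultiplicity {p : ℕ} (hp : p ≠ 1) (z : ℤ) :
    ordZ p z = emultiplicity (p : ℤ) z := by
  unfold ordZ
  split_ifs with hz
  · rw [hz, emultiplicity_zero]
  · rw [padicValInt, padicValNat_eq_emultiplicity_of_ne_one hp (Int.natAbs_ne_zero.2 hz),
      Int.emultiplicity_natAbs]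

theorem natCast_pow_dvd_natCast_sub_iff {p a b k : ℕ} :
    (p : ℤ) ^ k ∣ (a : ℤ) - b ↔ a ≡ b [MOD p ^ k] := by
  rw [Nat.ModEq.comm, Nat.modEq_iff_dvd, Nat.cast_pow]

theorem stmt1 (p m : ℕ) (hp : 1 < p) (xs ys : Fin m → ℕ)
    (hle : ∀ i, ys i ≤ xs i) (hne : xs ≠ ys)
    (N : ℕ∞) (hN : N = ⨅ i, ordE p (xs i - ys i)) :
    N ≤ ordZ p ((oplusSum p Finset.univ xs : ℤ) - (oplusSum p Finset.univ ys : ℤ)) ∧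
      (ordZ p ((oplusSum p Finset.univ xs : ℤ) - (oplusSum p Finset.univ ys : ℤ)) = N ↔
        ordE p (∑ i, (xs i - ys i)) = N) := by
  simp only [ordE_eq_emultiplicity hp.ne', ordZ_eq_emultiplicity hp.ne'] at hN ⊢
  have hN_le : ∀ i, N ≤ emultiplicity p (xs i - ys i) := fun i => hN.trans_le (iInf_le _ i)
  obtain ⟨j, hj⟩ := Function.ne_iff.1 hne
  have hj_fin : FiniteMultiplicity p (xs j - ys j) :=
    Nat.finiteMultiplicity_iff.2 ⟨hp.ne', by have := hle j; omega⟩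
  lift N to ℕ using ((hN_le j).trans_lt (emultiplicity_lt_top.2 hj_fin)).ne with n
  choose d hd using fun i => pow_dvd_iff_le_emultiplicity.2 (hN_le i)
  have hxy : ∀ i ∈ univ, xs i = ys i + p ^ n * d i := fun i _ => by
    have := hd i; have := hle i; omega
  have hsum : ∑ i, (xs i - ys i) = p ^ n * ∑ i, d i := by
    rw [mul_sum]; exact sum_congr rfl fun i _ => hd i
  have hmod : oplusSum p univ xs ≡ oplusSum p univ ys [MOD p ^ n] :=
    oplusSum_modEq_pow hp univ fun i _ => ((Nat.modEq_iff_dvd' (hle i)).2 ⟨d i, hd i⟩).symm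
  refine ⟨pow_dvd_iff_le_emultiplicity.1 (natCast_pow_dvd_natCast_sub_iff.2 hmod), ?_⟩
  rw [emultiplicity_eq_coe, emultiplicity_eq_coe, natCast_pow_dvd_natCast_sub_iff,
    natCast_pow_dvd_natCast_sub_iff, oplusSum_modEq_pow_succ_iff hp univ hxy, hsum, pow_succ,
    Nat.mul_dvd_mul_iff_left (by positivity)]
  simp [hmod]
end

section
/- Let p > 1 be an integer, X a finite set of distinct non-negative integers, and L ≥ 0. The number of hooks of the partition λ(X) whose length is a multiple of p^L equals ∑_{x ∈ X} ⌊x/p^L⌋ − ∑_{R ∈ (Z/p)^L} C(|X_R|, 2), where X_R = {⌊x/p^L⌋ : x ∈ X, x ≡ R (mod p^L)}, with R identified with an integer in [0, p^L) via its p-ary digits. -/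
/-- `hL p L X` is the number of hooks of `λ(X)` with length divisible by `p^L`:
hooks of `λ(X)` correspond bijectively to pairs `(x, y)` with `x ∈ X`, `0 ≤ y < x`,
`y ∉ X`, with hook length `x - y`. -/
def hL (p L : ℕ) (X : Finset ℕ) : ℕ :=
  ∑ x ∈ X, ((Finset.range x).filter fun y => y ∉ X ∧ p ^ L ∣ x - y).card

lemma lemA (q x : ℕ) : ((Finset.range x).filter fun y => q ∣ x - y).card = x / q := by
  rw [← Nat.Ioc_filter_dvd_card_eq_div x q]
  apply Finset.card_bij' (fun y _ => x - y) (fun z _ => x - z)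
  · intro y hy
    simp only [Finset.mem_filter, Finset.mem_range] at hy
    simp only [Finset.mem_filter, Finset.mem_Ioc]
    exact ⟨⟨by omega, by omega⟩, hy.2⟩
  · intro z hz
    simp only [Finset.mem_filter, Finset.mem_Ioc] at hz
    simp only [Finset.mem_filter, Finset.mem_range]
    constructor
    · omega
    · have : x - (x - z) = z := by omega
      rw [this]; exact hz.2
  · intro y hy
    simp only [Finset.mem_filter, Finset.mem_range] at hy
    omega
  · intro z hz
    simp only [Finset.mem_filter, Finset.mem_Ioc] at hz
    omega

lemma sumlt (S : Finset ℕ) : ∑ x ∈ S, (S.filter (· < x)).card = S.card.choose 2 := by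
  induction S using Finset.strongInduction with
  | _ S ih =>
    rcases S.eq_empty_or_nonempty with rfl | hS
    · simp
    · set m := S.max' hS with hm
      have hmS : m ∈ S := S.max'_mem hS
      set T := S.erase m with hT
      have hTS : T ⊂ S := Finset.erase_ssubset hmS
      have h1 : S.filter (· < m) = T := by
        ext y
        simp only [Finset.mem_filter, hT, Finset.mem_erase]
        constructor
        · rintro ⟨hy, hlt⟩; exact ⟨by omega, hy⟩
        · rintro ⟨hne, hy⟩
          exact ⟨hy, lt_of_le_of_ne (S.le_max' y hy) hne⟩
      have h2 : ∀ x ∈ T, S.filter (· < x) = T.filter (· < x) := by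
        intro x hx
        have hxm : x ≤ m := S.le_max' x (Finset.mem_of_mem_erase hx)
        ext y
        simp only [Finset.mem_filter, hT, Finset.mem_erase]
        constructor
        · rintro ⟨hy, hlt⟩; exact ⟨⟨by omega, hy⟩, hlt⟩
        · rintro ⟨⟨_, hy⟩, hlt⟩; exact ⟨hy, hlt⟩
      have hsum : ∑ x ∈ S, (S.filter (· < x)).card
          = (S.filter (· < m)).card + ∑ x ∈ T, (S.filter (· < x)).card :=
        (Finset.add_sum_erase S _ hmS).symm
      rw [hsum, h1, Finset.sum_congr rfl (fun x hx => by rw [h2 x hx]), ih T hTS]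
      have hcard : S.card = T.card + 1 := by
        rw [hT, Finset.card_erase_of_mem hmS]
        have : 0 < S.card := Finset.card_pos.mpr hS
        omega
      rw [hcard, Nat.choose_succ_succ]
      simp [Nat.choose_one_right]

theorem stmt6 (p L : ℕ) (hp : 1 < p) (X : Finset ℕ) :
    (hL p L X : ℤ) =
      ∑ x ∈ X, ((x / p ^ L : ℕ) : ℤ) -
        ∑ R ∈ Finset.range (p ^ L),
          ((X.filter fun x => x % p ^ L = R).card.choose 2 : ℤ) := by
  set q := p ^ L with hqdef
  have hq : 0 < q := pow_pos (by omega) L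
  -- per-x splitting
  have hsplit : ∀ x : ℕ,
      ((Finset.range x).filter fun y => y ∉ X ∧ q ∣ x - y).card
      + ((Finset.range x).filter fun y => y ∈ X ∧ q ∣ x - y).card = x / q := by
    intro x
    have h := Finset.card_filter_add_card_filter_not
      (s := (Finset.range x).filter fun y => q ∣ x - y) (p := fun y => y ∈ X)
    rw [Finset.filter_filter, Finset.filter_filter] at h
    have e1 : ((Finset.range x).filter fun y => q ∣ x - y ∧ y ∈ X)
        = (Finset.range x).filter fun y => y ∈ X ∧ q ∣ x - y := by
      apply Finset.filter_congr; intro y _; exact and_comm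
    have e2 : ((Finset.range x).filter fun y => q ∣ x - y ∧ ¬ y ∈ X)
        = (Finset.range x).filter fun y => y ∉ X ∧ q ∣ x - y := by
      apply Finset.filter_congr; intro y _; exact and_comm
    rw [e1, e2, lemA] at h
    omega
  -- the "in X" part equals sum of chooses
  have hC : ∑ x ∈ X, ((Finset.range x).filter fun y => y ∈ X ∧ q ∣ x - y).card
      = ∑ R ∈ Finset.range q, (X.filter fun x => x % q = R).card.choose 2 := by
    have hrw : ∀ x : ℕ, ((Finset.range x).filter fun y => y ∈ X ∧ q ∣ x - y)
        = (X.filter fun y => y % q = x % q).filter (· < x) := by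
      intro x
      ext y
      simp only [Finset.mem_filter, Finset.mem_range]
      constructor
      · rintro ⟨hlt, hy, hdvd⟩
        refine ⟨⟨hy, ?_⟩, hlt⟩
        exact (Nat.modEq_iff_dvd' (le_of_lt hlt)).mpr hdvd
      · rintro ⟨⟨hy, hmod⟩, hlt⟩
        exact ⟨hlt, hy, (Nat.modEq_iff_dvd' (le_of_lt hlt)).mp hmod⟩
    calc ∑ x ∈ X, ((Finset.range x).filter fun y => y ∈ X ∧ q ∣ x - y).card
        = ∑ x ∈ X, ((X.filter fun y => y % q = x % q).filter (· < x)).card := by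
          exact Finset.sum_congr rfl fun x _ => by rw [hrw]
      _ = ∑ R ∈ Finset.range q, ∑ x ∈ X.filter (fun x => x % q = R),
            ((X.filter fun y => y % q = x % q).filter (· < x)).card := by
          rw [Finset.sum_fiberwise_of_maps_to (fun x _ => Finset.mem_range.mpr (Nat.mod_lt x hq))]
      _ = ∑ R ∈ Finset.range q, (X.filter fun x => x % q = R).card.choose 2 := by
          refine Finset.sum_congr rfl fun R _ => ?_
          rw [← sumlt (X.filter fun x => x % q = R)]
          refine Finset.sum_congr rfl fun x hx => ?_
          have : x % q = R := (Finset.mem_filter.mp hx).2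
          rw [this]
  have hkey : hL p L X + ∑ R ∈ Finset.range q, (X.filter fun x => x % q = R).card.choose 2
      = ∑ x ∈ X, x / q := by
    rw [← hC, hL, ← Finset.sum_add_distrib]
    exact Finset.sum_congr rfl fun x _ => hsplit x
  have := congrArg (Nat.cast : ℕ → ℤ) hkey
  push_cast at this ⊢
  linarith
end

section
/- Let p > 1 be an integer and X a finite set of distinct non-negative integers. For L ≥ 0, let h_L(X) be the number of hooks of λ(X) with length divisible by p^L, and let t_L(X) = h_L(X) − p·h_{L+1}(X). Then t_L(X) ≥ 0 for all L, and ∑_{L ≥ 0} t_L(X) p^L = |λ(X)|, the number of cells of λ(X). -/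
open Finset

def dvdHookCount (d : ℕ) (X : Finset ℕ) : ℕ :=
  ∑ x ∈ X, #{y ∈ range x | y ∉ X ∧ d ∣ x - y}

lemma hL_eq_dvdHookCount (p L : ℕ) (X : Finset ℕ) : hL p L X = dvdHookCount (p ^ L) X := rfl

lemma card_filter_range_dvd_sub (d x : ℕ) : #{y ∈ range x | d ∣ x - y} = x / d := by
  rw [← Nat.card_multiples]
  refine card_nbij' (fun y => x - 1 - y) (fun y => x - 1 - y) ?_ ?_ ?_ ?_ <;>
    intro y hy <;> simp only [coe_filter, Set.mem_ofPred_eq, mem_range] at hy ⊢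
  · exact ⟨by omega, by rw [show x - 1 - y + 1 = x - y by omega]; exact hy.2⟩
  · exact ⟨by omega, by rw [show x - (x - 1 - y) = y + 1 by omega]; exact hy.2⟩
  · omega
  · omega

lemma sum_card_filter_lt {α : Type*} [LinearOrder α] (s : Finset α) :
    ∑ x ∈ s, #{y ∈ s | y < x} = (#s).choose 2 := by
  induction s using Finset.induction_on_max with
  | empty => simp
  | insert a s hlt ih =>
    have ha : a ∉ s := fun h => (hlt a h).false
    have hold : ∀ x ∈ s, #{y ∈ insert a s | y < x} = #{y ∈ s | y < x} := fun x hx => by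
      rw [filter_insert, if_neg (hlt x hx).asymm]
    have hnew : {y ∈ insert a s | y < a} = s := by
      rw [filter_insert, if_neg (lt_irrefl a), filter_true_of_mem hlt]
    rw [sum_insert ha, sum_congr rfl hold, ih, hnew, card_insert_of_notMem ha,
      Nat.choose_succ_succ, Nat.choose_one_right, add_comm]

lemma sum_card_filter_range_mem_dvd_sub {d : ℕ} (hd : 0 < d) (X : Finset ℕ) :
    ∑ x ∈ X, #{y ∈ range x | y ∈ X ∧ d ∣ x - y} =
      ∑ r ∈ range d, (#{z ∈ X | z % d = r}).choose 2 := by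
  have hresidue : ∀ x ∈ X, {y ∈ range x | y ∈ X ∧ d ∣ x - y} =
      {y ∈ {z ∈ X | z % d = x % d} | y < x} := fun x _ => by
    ext y
    simp only [mem_filter, mem_range]
    constructor
    · rintro ⟨hyx, hyX, hdvd⟩
      exact ⟨⟨hyX, (Nat.modEq_iff_dvd' hyx.le).2 hdvd⟩, hyx⟩
    · rintro ⟨⟨hyX, hmod⟩, hyx⟩
      exact ⟨hyx, hyX, (Nat.modEq_iff_dvd' hyx.le).1 hmod⟩
  rw [sum_congr rfl fun x hx => congrArg card (hresidue x hx),
    ← sum_fiberwise_of_maps_to (t := range d) (g := (· % d))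
      fun x _ => mem_range.2 (Nat.mod_lt x hd)]
  refine sum_congr rfl fun r _ => ?_
  rw [← sum_card_filter_lt]
  exact sum_congr rfl fun x hx => by rw [(mem_filter.1 hx).2]

lemma dvdHookCount_add_sum_choose {d : ℕ} (hd : 0 < d) (X : Finset ℕ) :
    dvdHookCount d X + ∑ r ∈ range d, (#{z ∈ X | z % d = r}).choose 2 = ∑ x ∈ X, x / d := by
  rw [dvdHookCount, ← sum_card_filter_range_mem_dvd_sub hd, ← sum_add_distrib]
  refine sum_congr rfl fun x _ => ?_
  rw [add_comm, ← card_filter_range_dvd_sub d x,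
    ← card_filter_add_card_filter_not (s := {y ∈ range x | d ∣ x - y}) (· ∈ X),
    filter_filter, filter_filter]
  simp only [and_comm]

lemma dvdHookCount_insert_add {d q y : ℕ} {S : Finset ℕ} (hd : 0 < d) (hdq : d ∣ q)
    (hy : y ∉ S) (hyq : y + q ∉ S) :
    dvdHookCount d (insert (y + q) S) = dvdHookCount d (insert y S) + q / d := by
  have hmod : (y + q) % d = y % d := by obtain ⟨k, rfl⟩ := hdq; simp
  have hclass : ∀ r, #{z ∈ insert (y + q) S | z % d = r} = #{z ∈ insert y S | z % d = r} := by
    intro r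
    simp only [filter_insert, hmod]
    split_ifs
    · rw [card_insert_of_notMem (by simp [hyq]), card_insert_of_notMem (by simp [hy])]
    · rfl
  have hsum : ∑ z ∈ insert (y + q) S, z / d = ∑ z ∈ insert y S, z / d + q / d := by
    rw [sum_insert hyq, sum_insert hy, Nat.add_div_of_dvd_left hdq]
    ring
  have hX := dvdHookCount_add_sum_choose hd (insert (y + q) S)
  have hX' := dvdHookCount_add_sum_choose hd (insert y S)
  simp only [hclass] at hX
  omega

lemma exists_notMem_add_mem_of_add_mul_mem {X : Finset ℕ} {y q : ℕ} (hy : y ∉ X) :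
    ∀ {k}, y + q * k ∈ X → ∃ z ∉ X, z + q ∈ X
  | 0, hk => absurd (by simpa using hk) hy
  | k + 1, hk => by
    by_cases hmid : y + q * k ∈ X
    · exact exists_notMem_add_mem_of_add_mul_mem hy hmid
    · exact ⟨_, hmid, by rwa [mul_add_one, ← add_assoc] at hk⟩

lemma exists_notMem_add_mem_of_dvdHookCount_pos {q : ℕ} {X : Finset ℕ}
    (h : 0 < dvdHookCount q X) : ∃ y ∉ X, y + q ∈ X := by
  obtain ⟨x, hx, hpos⟩ := sum_pos_iff.1 h
  obtain ⟨y, hy⟩ := card_pos.1 hpos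
  simp only [mem_filter, mem_range] at hy
  obtain ⟨hyx, hyX, k, hk⟩ := hy
  exact exists_notMem_add_mem_of_add_mul_mem hyX (k := k)
    (by rwa [← hk, Nat.add_sub_cancel' hyx.le])

theorem div_mul_dvdHookCount_le {d q : ℕ} (hdq : d ∣ q) (X : Finset ℕ) :
    q / d * dvdHookCount q X ≤ dvdHookCount d X := by
  obtain ⟨n, hn⟩ : ∃ n, dvdHookCount q X = n := ⟨_, rfl⟩
  induction n generalizing X with
  | zero => simp [hn]
  | succ n ih =>
    obtain ⟨y, hy, hyq⟩ := exists_notMem_add_mem_of_dvdHookCount_pos (q := q) (X := X) (by omega)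
    have hq : 0 < q := Nat.pos_of_ne_zero fun h => hy (by rwa [h, add_zero] at hyq)
    have hyS : y ∉ X.erase (y + q) := fun h => hy (mem_of_mem_erase h)
    have hyqS : y + q ∉ X.erase (y + q) := notMem_erase _ _
    have hqstep := dvdHookCount_insert_add hq dvd_rfl hyS hyqS
    have hdstep := dvdHookCount_insert_add (Nat.pos_of_dvd_of_pos hdq hq) hdq hyS hyqS
    rw [insert_erase hyq, Nat.div_self hq] at hqstep
    rw [insert_erase hyq] at hdstep
    have := ih (insert y (X.erase (y + q))) (by omega)
    rw [show dvdHookCount q (insert y (X.erase (y + q))) = n by omega] at this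
    rw [hn, hdstep, mul_add_one]
    linarith

lemma dvdHookCount_eq_zero_of_forall_lt {d : ℕ} {X : Finset ℕ} (h : ∀ x ∈ X, x < d) :
    dvdHookCount d X = 0 := by
  refine sum_eq_zero fun x hx => card_eq_zero.2 <| filter_eq_empty_iff.2 fun y hy ⟨_, hdvd⟩ => ?_
  have := Nat.le_of_dvd (by simp at hy; omega) hdvd
  have := h x hx
  omega

lemma sum_range_tsub_add_of_succ_le {g : ℕ → ℕ} (h : ∀ i, g (i + 1) ≤ g i) (n : ℕ) :
    ∑ i ∈ range n, (g i - g (i + 1)) + g n = g 0 := by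
  induction n with
  | zero => simp
  | succ n ih => have := h n; rw [sum_range_succ]; omega

theorem stmt7 (p : ℕ) (hp : 1 < p) (X : Finset ℕ) :
    (∀ L, p * hL p (L + 1) X ≤ hL p L X) ∧
      ∑ L ∈ Finset.range (X.sup id + 1), (hL p L X - p * hL p (L + 1) X) * p ^ L =
        hL p 0 X := by
  have hstep (L : ℕ) : p * hL p (L + 1) X ≤ hL p L X := by
    have hdiv : p ^ (L + 1) / p ^ L = p := by
      rw [pow_succ, Nat.mul_div_cancel_left _ (by positivity)]
    have := div_mul_dvdHookCount_le (pow_dvd_pow p L.le_succ) X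
    rwa [hdiv, ← hL_eq_dvdHookCount, ← hL_eq_dvdHookCount] at this
  refine ⟨hstep, ?_⟩
  have hvanish : hL p (X.sup id + 1) X = 0 := by
    rw [hL_eq_dvdHookCount]
    refine dvdHookCount_eq_zero_of_forall_lt fun x hx => (Nat.lt_pow_self hp).trans_le ?_
    exact Nat.pow_le_pow_right (by omega) ((le_sup (f := id) hx).trans (Nat.le_succ _))
  have hterm (L : ℕ) : (hL p L X - p * hL p (L + 1) X) * p ^ L =
      hL p L X * p ^ L - hL p (L + 1) X * p ^ (L + 1) := by
    rw [Nat.sub_mul, pow_succ]; ring_nf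
  have hdecr (L : ℕ) : hL p (L + 1) X * p ^ (L + 1) ≤ hL p L X * p ^ L := calc
    hL p (L + 1) X * p ^ (L + 1) = p * hL p (L + 1) X * p ^ L := by ring
    _ ≤ hL p L X * p ^ L := Nat.mul_le_mul_right _ (hstep L)
  have := sum_range_tsub_add_of_succ_le (g := fun L => hL p L X * p ^ L) hdecr (X.sup id + 1)
  simpa [hterm, hvanish] using this
end

section
/- Let p > 1 be an integer. Let X = {x^1, ..., x^m} and Y = {y^1, ..., y^m} be positions in Welter's game (in tuple representation, y^i ≤ x^i for all i, Y ≠ X). Let N = min_i ord_p(x^i − y^i). Then the p-core tower digits satisfy t̄_L(X) = t̄_L(Y) for all L < N, and t̄_N(X) − t̄_N(Y) ≡ the N-th p-ary digit of ∑_i (x^i − y^i) (mod p). In particular, ord_p(t̄(X) − t̄(Y)) ≥ N with equality iff ord_p(∑_i (x^i − y^i)) = N, where t̄(Z) = ∑_L t̄_L(Z) p^L. -/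
/-- `t̄_L(X)`: `h_L(X) - p h_{L+1}(X)` reduced mod `p` to lie in `{0, …, p-1}`. -/
def tbarL (p L : ℕ) (X : Finset ℕ) : ℕ :=
  (((hL p L X : ℤ) - p * hL p (L + 1) X) % p).toNat

/-- `t̄(X) = ∑_L t̄_L(X) p^L` (all terms with `L > sup X` vanish). -/
def tbar (p : ℕ) (X : Finset ℕ) : ℕ :=
  ∑ L ∈ Finset.range (X.sup id + 1), tbarL p L X * p ^ L

open Finset

/- ### Auxiliary lemmas -/

lemma padicValNat_eq_iff' {p n k : ℕ} (hp : 1 < p) (hn : n ≠ 0) :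
    padicValNat p n = k ↔ p ^ k ∣ n ∧ ¬ p ^ (k+1) ∣ n := by
  rw [padicValNat_def' hp.ne' hn]
  constructor
  · rintro rfl
    have hf := Nat.finiteMultiplicity_iff.2 ⟨hp.ne', Nat.pos_of_ne_zero hn⟩
    exact ⟨pow_multiplicity_dvd _ _, hf.not_pow_dvd_of_multiplicity_lt (lt_add_one _)⟩
  · rintro ⟨h1, h2⟩; exact multiplicity_eq_of_dvd_of_not_dvd h1 h2

lemma le_padicValNat_of_pow_dvd' {p n k : ℕ} (hp : 1 < p) (hn : n ≠ 0) (h : p ^ k ∣ n) :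
    k ≤ padicValNat p n := by
  rw [padicValNat_def' hp.ne' hn]
  exact (Nat.finiteMultiplicity_iff.2 ⟨hp.ne', Nat.pos_of_ne_zero hn⟩).le_multiplicity_of_pow_dvd h

lemma pow_dvd_of_le_ordE {p k a : ℕ} (h : (k : ℕ∞) ≤ ordE p a) : p ^ k ∣ a := by
  by_cases ha : a = 0
  · simp [ha]
  · have h1 : (k : ℕ∞) ≤ (padicValNat p a : ℕ∞) := by simpa [ordE, ha] using h
    have h2 : k ≤ padicValNat p a := by exact_mod_cast h1
    exact dvd_trans (pow_dvd_pow p h2) pow_padicValNat_dvd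

lemma card_filter_dvd (q x : ℕ) (hq : 0 < q) :
    (((Finset.range x).filter fun y => q ∣ x - y)).card = x / q := by
  rw [← Finset.card_range (x / q)]
  apply Finset.card_nbij' (fun y => (x - y) / q - 1) (fun k => x - (k + 1) * q)
  · intro y hy
    simp only [coe_filter, Set.mem_setOf_eq, mem_coe, mem_filter, mem_range] at hy
    obtain ⟨hyx, d, hd⟩ := hy
    have hd1 : 1 ≤ d := by
      rcases Nat.eq_zero_or_pos d with h | h
      · subst h; omega
      · exact h
    have e1 : (x - y) / q = d := by rw [hd, Nat.mul_div_cancel_left d hq]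
    have e2 : d * q = q * d := mul_comm _ _
    have e3 : d ≤ x / q := Nat.le_div_iff_mul_le hq |>.2 (by omega)
    beta_reduce
    rw [mem_coe, mem_range, e1]
    omega
  · intro k hk
    rw [mem_coe, mem_range] at hk
    have hk1 : (k + 1) * q ≤ x := Nat.le_div_iff_mul_le hq |>.1 (by omega)
    have hq2 : 0 < (k + 1) * q := by positivity
    have e2 : (k + 1) * q = q * (k + 1) := mul_comm _ _
    simp only [coe_filter, Set.mem_setOf_eq, mem_coe, mem_filter, mem_range]
    exact ⟨by omega, (k + 1), by omega⟩
  · intro y hy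
    simp only [coe_filter, Set.mem_setOf_eq, mem_coe, mem_filter, mem_range] at hy
    obtain ⟨hyx, d, hd⟩ := hy
    have hd1 : 1 ≤ d := by
      rcases Nat.eq_zero_or_pos d with h | h
      · subst h; omega
      · exact h
    have e1 : (x - y) / q = d := by rw [hd, Nat.mul_div_cancel_left d hq]
    beta_reduce
    rw [e1]
    have e4 : d - 1 + 1 = d := by omega
    rw [e4]
    have e2 : d * q = q * d := mul_comm _ _
    omega
  · intro k hk
    rw [mem_coe, mem_range] at hk
    have hk1 : (k + 1) * q ≤ x := Nat.le_div_iff_mul_le hq |>.1 (by omega)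
    have e : x - (x - (k + 1) * q) = (k + 1) * q := by omega
    beta_reduce
    rw [e, Nat.mul_div_cancel _ hq]
    omega

/-- The number of pairs `y < x` in `Z` congruent mod `p ^ L`. -/
def PL (p L : ℕ) (Z : Finset ℕ) : ℕ :=
  ∑ x ∈ Z, (Z.filter fun y => y < x ∧ p ^ L ∣ x - y).card

lemma hL_add_PL {p : ℕ} (hp : 0 < p) (L : ℕ) (Z : Finset ℕ) :
    hL p L Z + PL p L Z = ∑ x ∈ Z, x / p ^ L := by
  unfold hL PL
  rw [← Finset.sum_add_distrib]
  refine Finset.sum_congr rfl fun x hx => ?_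
  have hq : 0 < p ^ L := pow_pos hp L
  have eA : (Finset.range x).filter (fun y => y ∉ Z ∧ p ^ L ∣ x - y)
      = ((Finset.range x).filter fun y => p ^ L ∣ x - y).filter (fun y => ¬ y ∈ Z) := by
    ext y; simp only [mem_filter, mem_range]; tauto
  have eB : Z.filter (fun y => y < x ∧ p ^ L ∣ x - y)
      = ((Finset.range x).filter fun y => p ^ L ∣ x - y).filter (fun y => y ∈ Z) := by
    ext y; simp only [mem_filter, mem_range]; tauto
  rw [eA, eB, ← card_filter_dvd (p ^ L) x hq, add_comm,
    Finset.card_filter_add_card_filter_not]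

lemma PL_index {p L m : ℕ} (zs : Fin m → ℕ) (hinj : Function.Injective zs) :
    PL p L (Finset.image zs Finset.univ)
      = ∑ i : Fin m, ∑ j : Fin m,
          if zs j < zs i ∧ p ^ L ∣ zs i - zs j then 1 else 0 := by
  unfold PL
  rw [Finset.sum_image (fun a _ b _ h => hinj h)]
  refine Finset.sum_congr rfl fun i _ => ?_
  rw [Finset.filter_image, Finset.card_image_of_injective _ hinj, Finset.card_filter]

lemma PL_eq {p L m : ℕ} (xs ys : Fin m → ℕ)
    (hxinj : Function.Injective xs) (hyinj : Function.Injective ys)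
    (hle : ∀ i, ys i ≤ xs i) (hdvd : ∀ i, p ^ L ∣ xs i - ys i) :
    PL p L (Finset.image xs Finset.univ) = PL p L (Finset.image ys Finset.univ) := by
  have key : ∀ zs : Fin m → ℕ, Function.Injective zs →
      2 * (∑ i : Fin m, ∑ j : Fin m, if zs j < zs i ∧ p ^ L ∣ zs i - zs j then 1 else 0)
        = ∑ i : Fin m, ∑ j : Fin m,
            if i ≠ j ∧ ((p : ℤ) ^ L ∣ (zs i : ℤ) - zs j) then 1 else 0 := by
    intro zs hinj
    have hswap : (∑ i : Fin m, ∑ j : Fin m, if zs j < zs i ∧ p ^ L ∣ zs i - zs j then 1 else 0)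
        = ∑ i : Fin m, ∑ j : Fin m, if zs i < zs j ∧ p ^ L ∣ zs j - zs i then 1 else 0 :=
      Finset.sum_comm
    rw [two_mul]
    nth_rewrite 2 [hswap]
    rw [← Finset.sum_add_distrib]
    refine Finset.sum_congr rfl fun i _ => ?_
    rw [← Finset.sum_add_distrib]
    refine Finset.sum_congr rfl fun j _ => ?_
    rcases eq_or_ne i j with rfl | hij
    · simp [lt_irrefl]
    · have hzz : zs i ≠ zs j := fun h => hij (hinj h)
      rcases lt_or_gt_of_ne hzz with h | h
      · have c1 : ¬ (zs j < zs i ∧ p ^ L ∣ zs i - zs j) := by rintro ⟨h', -⟩; omega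
        have cast1 : ((zs j - zs i : ℕ) : ℤ) = (zs j : ℤ) - zs i := by
          rw [Int.ofNat_sub h.le]
        by_cases hd : p ^ L ∣ zs j - zs i
        · have : ((p : ℤ) ^ L ∣ (zs i : ℤ) - zs j) := by
            have := Int.natCast_dvd_natCast.2 hd
            rw [cast1] at this
            rw [← neg_sub (zs j : ℤ)]
            exact dvd_neg.2 (by push_cast at this ⊢; exact this)
          simp [c1, hd, h, hij, this]
        · have : ¬ ((p : ℤ) ^ L ∣ (zs i : ℤ) - zs j) := by
            intro hc
            apply hd
            have : ((p : ℤ) ^ L ∣ (zs j : ℤ) - zs i) := by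
              rw [← neg_sub]; exact dvd_neg.2 hc
            rw [← cast1] at this
            exact_mod_cast Int.natCast_dvd_natCast.1 (by push_cast at this ⊢; exact_mod_cast this)
          simp [c1, hd, h, hij, this]
      · have c2 : ¬ (zs i < zs j ∧ p ^ L ∣ zs j - zs i) := by rintro ⟨h', -⟩; omega
        have cast1 : ((zs i - zs j : ℕ) : ℤ) = (zs i : ℤ) - zs j := by
          rw [Int.ofNat_sub h.le]
        by_cases hd : p ^ L ∣ zs i - zs j
        · have : ((p : ℤ) ^ L ∣ (zs i : ℤ) - zs j) := by
            have := Int.natCast_dvd_natCast.2 hd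
            rw [cast1] at this; exact_mod_cast this
          simp [c2, hd, h, hij, this]
        · have : ¬ ((p : ℤ) ^ L ∣ (zs i : ℤ) - zs j) := by
            intro hc; apply hd
            rw [← cast1] at hc
            exact_mod_cast Int.natCast_dvd_natCast.1 (by exact_mod_cast hc)
          simp [c2, hd, h, hij, this]
  have hmod : ∀ i, ((p : ℤ) ^ L) ∣ (xs i : ℤ) - ys i := by
    intro i
    have := Int.natCast_dvd_natCast.2 (hdvd i)
    rwa [Int.ofNat_sub (hle i), Nat.cast_pow] at this
  have hTeq : (∑ i : Fin m, ∑ j : Fin m,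
        if i ≠ j ∧ ((p : ℤ) ^ L ∣ (xs i : ℤ) - xs j) then 1 else 0)
      = ∑ i : Fin m, ∑ j : Fin m,
        if i ≠ j ∧ ((p : ℤ) ^ L ∣ (ys i : ℤ) - ys j) then 1 else 0 := by
    refine Finset.sum_congr rfl fun i _ => Finset.sum_congr rfl fun j _ => ?_
    congr 1
    simp only [eq_iff_iff]
    have hx : ((xs i : ℤ) - xs j)
        = ((ys i : ℤ) - ys j) + (((xs i : ℤ) - ys i) - ((xs j : ℤ) - ys j)) := by ring
    constructor
    · rintro ⟨h1, h2⟩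
      refine ⟨h1, ?_⟩
      have := dvd_sub h2 (dvd_sub (hmod i) (hmod j))
      rwa [hx, add_sub_cancel_right] at this
    · rintro ⟨h1, h2⟩
      refine ⟨h1, ?_⟩
      rw [hx]
      exact dvd_add h2 (dvd_sub (hmod i) (hmod j))
  apply Nat.eq_of_mul_eq_mul_left (show 0 < 2 by norm_num)
  rw [PL_index xs hxinj, PL_index ys hyinj, key xs hxinj, key ys hyinj, hTeq]

lemma hL_sub {p L m : ℕ} (hp : 1 < p) (xs ys : Fin m → ℕ)
    (hxinj : Function.Injective xs) (hyinj : Function.Injective ys)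
    (hle : ∀ i, ys i ≤ xs i) (hdvd : ∀ i, p ^ L ∣ xs i - ys i) :
    (hL p L (Finset.image xs Finset.univ) : ℤ) - hL p L (Finset.image ys Finset.univ)
      = ∑ i : Fin m, (((xs i / p ^ L : ℕ) : ℤ) - ((ys i / p ^ L : ℕ) : ℤ)) := by
  have hx := hL_add_PL (p := p) (by omega) L (Finset.image xs Finset.univ)
  have hy := hL_add_PL (p := p) (by omega) L (Finset.image ys Finset.univ)
  rw [Finset.sum_image (fun a _ b _ h => hxinj h)] at hx
  rw [Finset.sum_image (fun a _ b _ h => hyinj h)] at hy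
  have hPL := PL_eq xs ys hxinj hyinj hle hdvd
  have hxZ : (hL p L (Finset.image xs Finset.univ) : ℤ)
      + PL p L (Finset.image xs Finset.univ) = ∑ i : Fin m, ((xs i / p ^ L : ℕ) : ℤ) := by
    exact_mod_cast congrArg (Nat.cast : ℕ → ℤ) hx
  have hyZ : (hL p L (Finset.image ys Finset.univ) : ℤ)
      + PL p L (Finset.image ys Finset.univ) = ∑ i : Fin m, ((ys i / p ^ L : ℕ) : ℤ) := by
    exact_mod_cast congrArg (Nat.cast : ℕ → ℤ) hy
  rw [Finset.sum_sub_distrib]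
  rw [hPL] at hxZ
  omega

lemma tbarL_int {p : ℕ} (hp : 1 < p) (L : ℕ) (Z : Finset ℕ) :
    (tbarL p L Z : ℤ) = ((hL p L Z : ℤ) - p * hL p (L + 1) Z) % p := by
  unfold tbarL
  exact Int.toNat_of_nonneg (Int.emod_nonneg _ (by exact_mod_cast (by omega : p ≠ 0)))

lemma tbarL_lt {p : ℕ} (hp : 1 < p) (L : ℕ) (Z : Finset ℕ) : tbarL p L Z < p := by
  unfold tbarL
  have h1 := Int.emod_lt_of_pos ((hL p L Z : ℤ) - p * hL p (L + 1) Z)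
    (show (0:ℤ) < p by exact_mod_cast (by omega : 0 < p))
  have h2 := Int.emod_nonneg ((hL p L Z : ℤ) - p * hL p (L + 1) Z)
    (show (p:ℤ) ≠ 0 by exact_mod_cast (by omega : p ≠ 0))
  omega

/-- The key congruence. -/
lemma tbarL_modEq {p L m : ℕ} (hp : 1 < p) (xs ys : Fin m → ℕ)
    (hxinj : Function.Injective xs) (hyinj : Function.Injective ys)
    (hle : ∀ i, ys i ≤ xs i) (hdvd : ∀ i, p ^ L ∣ xs i - ys i) :
    ((tbarL p L (Finset.image xs Finset.univ) : ℤ)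
        - tbarL p L (Finset.image ys Finset.univ))
      ≡ (∑ i : Fin m, (((xs i / p ^ L : ℕ) : ℤ) - ((ys i / p ^ L : ℕ) : ℤ))) [ZMOD p] := by
  set X := Finset.image xs Finset.univ
  set Y := Finset.image ys Finset.univ
  set a : ℤ := (hL p L X : ℤ) - p * hL p (L + 1) X with ha
  set b : ℤ := (hL p L Y : ℤ) - p * hL p (L + 1) Y with hb
  have e1 : (tbarL p L X : ℤ) = a % p := tbarL_int hp L X
  have e2 : (tbarL p L Y : ℤ) = b % p := tbarL_int hp L Y
  have m1 : a % p ≡ a [ZMOD p] := Int.emod_emod_of_dvd a dvd_rfl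
  have m2 : b % p ≡ b [ZMOD p] := Int.emod_emod_of_dvd b dvd_rfl
  have e3 : a - b = ((hL p L X : ℤ) - hL p L Y)
      - p * ((hL p (L+1) X : ℤ) - hL p (L+1) Y) := by rw [ha, hb]; ring
  have e4 := hL_sub hp xs ys hxinj hyinj hle hdvd
  calc (tbarL p L X : ℤ) - tbarL p L Y = a % p - b % p := by rw [e1, e2]
    _ ≡ a - b [ZMOD p] := Int.ModEq.sub m1 m2
    _ ≡ (∑ i : Fin m, (((xs i / p ^ L : ℕ) : ℤ) - ((ys i / p ^ L : ℕ) : ℤ))) [ZMOD p] := by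
        rw [e3, e4]
        have : (p : ℤ) * ((hL p (L+1) X : ℤ) - hL p (L+1) Y) ≡ 0 [ZMOD p] :=
          Int.modEq_zero_iff_dvd.2 ⟨_, rfl⟩
        calc _ ≡ (∑ i : Fin m, (((xs i / p ^ L : ℕ) : ℤ) - ((ys i / p ^ L : ℕ) : ℤ))) - 0
              [ZMOD p] := Int.ModEq.sub (Int.ModEq.refl _) this
          _ = _ := by ring


lemma hL_zero {p L : ℕ} (Z : Finset ℕ) (h : ∀ x ∈ Z, x < p ^ L) : hL p L Z = 0 := by
  unfold hL
  apply Finset.sum_eq_zero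
  intro x hx
  rw [Finset.card_eq_zero, Finset.filter_eq_empty_iff]
  intro y hy
  rw [mem_range] at hy
  rintro ⟨h1, h2⟩
  have h3 : p ^ L ≤ x - y := Nat.le_of_dvd (by omega) h2
  have := h x hx
  omega

lemma tbarL_zero_of_big {p L : ℕ} (hp : 1 < p) (Z : Finset ℕ) (h : Z.sup id < L) :
    tbarL p L Z = 0 := by
  have hbig : ∀ L' : ℕ, L ≤ L' → ∀ x ∈ Z, x < p ^ L' := by
    intro L' hL' x hx
    have h1 : x ≤ Z.sup id := Finset.le_sup (f := id) hx
    have h2 : L' < p ^ L' := Nat.lt_pow_self hp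
    omega
  unfold tbarL
  rw [hL_zero Z (hbig L le_rfl), hL_zero Z (hbig (L+1) (by omega))]
  simp

lemma tbar_ext {p : ℕ} (hp : 1 < p) (Z : Finset ℕ) {M : ℕ} (h : Z.sup id + 1 ≤ M) :
    tbar p Z = ∑ L ∈ Finset.range M, tbarL p L Z * p ^ L := by
  unfold tbar
  apply Finset.sum_subset (Finset.range_subset_range.2 h)
  intro L _ hL2
  rw [mem_range, not_lt] at hL2
  rw [tbarL_zero_of_big hp Z (by omega), zero_mul]

theorem stmt8 (p m : ℕ) (hp : 1 < p) (xs ys : Fin m → ℕ)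
    (hxinj : Function.Injective xs) (hyinj : Function.Injective ys)
    (hle : ∀ i, ys i ≤ xs i) (hne : xs ≠ ys)
    (X Y : Finset ℕ) (hX : X = Finset.image xs Finset.univ)
    (hY : Y = Finset.image ys Finset.univ)
    (N : ℕ∞) (hN : N = ⨅ i, ordE p (xs i - ys i)) :
    (∀ L : ℕ, (L : ℕ∞) < N → tbarL p L X = tbarL p L Y) ∧
    (∀ N' : ℕ, (N' : ℕ∞) = N →
      Int.ModEq (p : ℤ) ((tbarL p N' X : ℤ) - (tbarL p N' Y : ℤ))
        ((digit p N' (∑ i, (xs i - ys i)) : ℤ))) ∧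
    N ≤ ordZ p ((tbar p X : ℤ) - (tbar p Y : ℤ)) ∧
    (ordZ p ((tbar p X : ℤ) - (tbar p Y : ℤ)) = N ↔
      ordE p (∑ i, (xs i - ys i)) = N) := by
  subst hX hY
  obtain ⟨i0, hi0⟩ := Function.ne_iff.1 hne
  have hd0 : xs i0 - ys i0 ≠ 0 := by have := hle i0; omega
  set S := ∑ i, (xs i - ys i) with hS
  have hS0 : S ≠ 0 := by
    have hpos : 0 < S :=
      Finset.sum_pos' (fun i _ => Nat.zero_le _)
        ⟨i0, Finset.mem_univ _, by have := hle i0; omega⟩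
    omega
  have hNle : ∀ i, N ≤ ordE p (xs i - ys i) := fun i => hN ▸ iInf_le _ i
  set X := Finset.image xs Finset.univ with hX
  set Y := Finset.image ys Finset.univ with hY
  -- Part 1
  have part1 : ∀ L : ℕ, (L : ℕ∞) < N → tbarL p L X = tbarL p L Y := by
    intro L hLN
    have hstep : ((L + 1 : ℕ) : ℕ∞) ≤ N := by
      have := (ENat.add_one_le_iff (show (L : ℕ∞) ≠ ⊤ by simp)).2 hLN
      simpa [Nat.cast_add, Nat.cast_one] using this
    have hdvd1 : ∀ i, p ^ (L + 1) ∣ xs i - ys i :=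
      fun i => pow_dvd_of_le_ordE (le_trans hstep (hNle i))
    have hdvd0 : ∀ i, p ^ L ∣ xs i - ys i :=
      fun i => dvd_trans (pow_dvd_pow p (Nat.le_succ L)) (hdvd1 i)
    have hmod := tbarL_modEq hp xs ys hxinj hyinj hle hdvd0
    have hsum : (∑ i : Fin m, (((xs i / p ^ L : ℕ) : ℤ) - ((ys i / p ^ L : ℕ) : ℤ)))
        = (p : ℤ) * ∑ i : Fin m, (((xs i - ys i) / p ^ (L+1) : ℕ) : ℤ) := by
      rw [Finset.mul_sum]
      refine Finset.sum_congr rfl fun i _ => ?_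
      have hc := Nat.mul_div_cancel' (hdvd1 i)
      have he : xs i = ys i + p ^ L * (p * ((xs i - ys i) / p ^ (L+1))) := by
        have h3 : p ^ L * (p * ((xs i - ys i) / p ^ (L+1)))
            = p ^ (L+1) * ((xs i - ys i) / p ^ (L+1)) := by ring
        rw [h3, hc]
        have := hle i
        omega
      have hdiv : xs i / p ^ L = ys i / p ^ L + p * ((xs i - ys i) / p ^ (L+1)) := by
        have h2 := Nat.add_mul_div_left (ys i) (p * ((xs i - ys i) / p ^ (L+1)))
          (pow_pos (by omega : 0 < p) L)
        rw [← he] at h2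
        exact h2
      rw [hdiv]
      push_cast
      ring
    rw [hsum] at hmod
    have hzero : ((p : ℤ) * ∑ i : Fin m, (((xs i - ys i) / p ^ (L+1) : ℕ) : ℤ)) ≡ 0 [ZMOD p] :=
      Int.modEq_zero_iff_dvd.2 ⟨_, rfl⟩
    have hfin : ((tbarL p L X : ℤ) - tbarL p L Y) ≡ 0 [ZMOD p] := hmod.trans hzero
    have hdvd' : (p : ℤ) ∣ (tbarL p L Y : ℤ) - tbarL p L X := by
      have h := Int.modEq_zero_iff_dvd.1 hfin
      have he' : (tbarL p L Y : ℤ) - tbarL p L X = -((tbarL p L X : ℤ) - tbarL p L Y) := by ring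
      rw [he']
      exact dvd_neg.2 h
    have hEq : (tbarL p L X : ℤ) ≡ (tbarL p L Y : ℤ) [ZMOD p] := Int.modEq_iff_dvd.2 hdvd'
    rw [Int.ModEq] at hEq
    rw [Int.emod_eq_of_lt (by positivity) (by exact_mod_cast tbarL_lt hp L X),
      Int.emod_eq_of_lt (by positivity) (by exact_mod_cast tbarL_lt hp L Y)] at hEq
    exact_mod_cast hEq
  -- Part 2
  have part2 : ∀ N' : ℕ, (N' : ℕ∞) = N →
      Int.ModEq (p : ℤ) ((tbarL p N' X : ℤ) - (tbarL p N' Y : ℤ)) ((digit p N' S : ℤ)) := by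
    intro n hn
    have hdvdn : ∀ i, p ^ n ∣ xs i - ys i := fun i => pow_dvd_of_le_ordE (hn ▸ hNle i)
    have hmod := tbarL_modEq hp xs ys hxinj hyinj hle hdvdn
    have hsum : (∑ i : Fin m, (((xs i / p ^ n : ℕ) : ℤ) - ((ys i / p ^ n : ℕ) : ℤ)))
        = ((∑ i : Fin m, (xs i - ys i) / p ^ n : ℕ) : ℤ) := by
      rw [Nat.cast_sum]
      refine Finset.sum_congr rfl fun i _ => ?_
      have hc := Nat.mul_div_cancel' (hdvdn i)
      have he : xs i = ys i + p ^ n * (1 * ((xs i - ys i) / p ^ n)) := by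
        rw [one_mul, hc]; have := hle i; omega
      have hdiv : xs i / p ^ n = ys i / p ^ n + 1 * ((xs i - ys i) / p ^ n) := by
        have h2 := Nat.add_mul_div_left (ys i) (1 * ((xs i - ys i) / p ^ n))
          (pow_pos (by omega : 0 < p) n)
        rw [← he] at h2
        exact h2
      rw [hdiv]
      push_cast
      ring
    have hdig : digit p n S = (∑ i : Fin m, (xs i - ys i) / p ^ n) % p := by
      unfold digit
      have hSe : S = p ^ n * ∑ i : Fin m, (xs i - ys i) / p ^ n := by
        rw [hS, Finset.mul_sum]
        exact Finset.sum_congr rfl fun i _ => (Nat.mul_div_cancel' (hdvdn i)).symm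
      rw [hSe, Nat.mul_div_cancel_left _ (pow_pos (by omega : 0 < p) n)]
    rw [hsum] at hmod
    refine hmod.trans ?_
    rw [hdig]
    push_cast
    exact (Int.emod_emod_of_dvd _ dvd_rfl).symm
  -- finiteness of N
  have hNtop : N ≠ ⊤ := by
    intro h
    have h2 := hNle i0
    rw [h, top_le_iff] at h2
    rw [ordE, if_neg hd0] at h2
    exact (ENat.coe_ne_top _) h2
  obtain ⟨n, hn⟩ : ∃ n : ℕ, (n : ℕ∞) = N := by
    cases N with
    | top => exact absurd rfl hNtop
    | coe n => exact ⟨n, rfl⟩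
  have hdvdn : ∀ i, p ^ n ∣ xs i - ys i := fun i => pow_dvd_of_le_ordE (le_of_eq_of_le hn (hNle i))
  have hSdvd : p ^ n ∣ S := hS ▸ Finset.dvd_sum fun i _ => hdvdn i
  set M := max (X.sup id + 1) (max (Y.sup id + 1) (n + 1)) with hM
  have hMX : X.sup id + 1 ≤ M := le_max_left _ _
  have hMY : Y.sup id + 1 ≤ M := le_trans (le_max_left _ _) (le_max_right _ _)
  have hnM : n < M :=
    lt_of_lt_of_le (Nat.lt_succ_self n) (le_trans (le_max_right _ _) (le_max_right _ _))
  set c : ℕ → ℤ := fun L => (tbarL p L X : ℤ) - tbarL p L Y with hc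
  set D : ℤ := (tbar p X : ℤ) - tbar p Y with hDdef
  have hD : D = ∑ L ∈ Finset.range M, c L * (p : ℤ) ^ L := by
    rw [hDdef, tbar_ext hp X hMX, tbar_ext hp Y hMY]
    push_cast
    rw [← Finset.sum_sub_distrib]
    exact Finset.sum_congr rfl fun L _ => by rw [hc]; ring
  have hc0 : ∀ L, L < n → c L = 0 := by
    intro L h
    have h1 : (L : ℕ∞) < N := by rw [← hn]; exact_mod_cast Nat.cast_lt.2 h
    rw [hc]
    simp only [part1 L h1, sub_self]
  have hcn : c n ≡ (digit p n S : ℤ) [ZMOD p] := part2 n hn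
  have hdvdD : (p : ℤ) ^ n ∣ D := by
    rw [hD]
    refine Finset.dvd_sum fun L _ => ?_
    rcases lt_or_ge L n with h | h
    · rw [hc0 L h, zero_mul]; exact dvd_zero _
    · exact dvd_mul_of_dvd_right (pow_dvd_pow _ h) _
  have hR : (p : ℤ) ^ (n + 1) ∣ ∑ L ∈ (Finset.range M).erase n, c L * (p : ℤ) ^ L := by
    refine Finset.dvd_sum fun L hl => ?_
    rw [Finset.mem_erase, Finset.mem_range] at hl
    rcases lt_or_ge L n with h | h
    · rw [hc0 L h, zero_mul]; exact dvd_zero _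
    · exact dvd_mul_of_dvd_right (pow_dvd_pow _ (by omega)) _
  have hsplit : D = c n * (p : ℤ) ^ n + ∑ L ∈ (Finset.range M).erase n, c L * (p : ℤ) ^ L := by
    rw [hD, ← Finset.add_sum_erase _ _ (Finset.mem_range.2 hnM)]
  have hb1 : ((p : ℤ) ^ (n + 1) ∣ D) ↔ (p : ℤ) ∣ c n := by
    rw [hsplit, add_comm (c n * (p : ℤ) ^ n), dvd_add_right hR, pow_succ,
      mul_comm (c n) ((p : ℤ) ^ n)]
    exact mul_dvd_mul_iff_left (pow_ne_zero n (show (p : ℤ) ≠ 0 by exact_mod_cast (by omega : p ≠ 0)))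
  obtain ⟨s, hs⟩ := hSdvd
  have hq : S / p ^ n = s := by rw [hs, Nat.mul_div_cancel_left _ (pow_pos (by omega : 0 < p) n)]
  have hdig : digit p n S = s % p := by unfold digit; rw [hq]
  have hb2 : ((p : ℤ) ∣ c n) ↔ p ^ (n + 1) ∣ S := by
    constructor
    · intro h
      have h1 : c n ≡ 0 [ZMOD p] := Int.modEq_zero_iff_dvd.2 h
      have h2 : (digit p n S : ℤ) ≡ 0 [ZMOD p] := hcn.symm.trans h1
      have h3 : (p : ℤ) ∣ (digit p n S : ℤ) := Int.modEq_zero_iff_dvd.1 h2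
      have h4 : p ∣ digit p n S := Int.natCast_dvd_natCast.1 h3
      have hlt : digit p n S < p := by rw [hdig]; exact Nat.mod_lt s (by omega)
      have h5 : digit p n S = 0 := Nat.eq_zero_of_dvd_of_lt h4 hlt
      have h6 : p ∣ s := Nat.dvd_of_mod_eq_zero (hdig ▸ h5)
      rw [hs, pow_succ]
      exact mul_dvd_mul_left _ h6
    · intro h
      have h6 : p ∣ s := by
        rw [hs, pow_succ] at h
        exact (Nat.mul_dvd_mul_iff_left (pow_pos (by omega : 0 < p) n)).1 h
      have h5 : digit p n S = 0 := by
        rw [hdig]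
        obtain ⟨t, rfl⟩ := h6
        exact Nat.mul_mod_right p t
      have h7 : c n ≡ 0 [ZMOD p] := by
        rw [h5] at hcn
        simpa using hcn
      exact Int.modEq_zero_iff_dvd.1 h7
  have hbr : ((p : ℤ) ^ (n + 1) ∣ D) ↔ p ^ (n + 1) ∣ S := hb1.trans hb2
  refine ⟨part1, part2, ?_, ?_⟩
  · -- N ≤ ordZ p D
    rcases eq_or_ne D 0 with h | h
    · simp only [ordZ, if_pos h]
      exact le_top
    · have hA : D.natAbs ≠ 0 := Int.natAbs_ne_zero.2 h
      have hdvd : p ^ n ∣ D.natAbs := Int.natCast_dvd.1 (by push_cast; exact hdvdD)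
      have hval := le_padicValNat_of_pow_dvd' hp hA hdvd
      simp only [ordZ, if_neg h, padicValInt]
      rw [← hn]
      exact_mod_cast hval
  · -- the equality iff
    have hOE : ordE p S = N ↔ ¬ p ^ (n + 1) ∣ S := by
      rw [ordE, if_neg hS0, ← hn, Nat.cast_inj, padicValNat_eq_iff' hp hS0]
      constructor
      · rintro ⟨-, h2⟩; exact h2
      · intro h2; exact ⟨⟨s, hs⟩, h2⟩
    have hOZ : ordZ p D = N ↔ ¬ (p : ℤ) ^ (n + 1) ∣ D := by
      constructor
      · intro h
        rcases eq_or_ne D 0 with h0 | h0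
        · exfalso
          apply hNtop
          simp only [ordZ, if_pos h0] at h
          exact h.symm
        · simp only [ordZ, if_neg h0, padicValInt] at h
          rw [← hn, Nat.cast_inj] at h
          have h9 := (padicValNat_eq_iff' hp (Int.natAbs_ne_zero.2 h0)).1 h
          intro hcon
          exact h9.2 (Int.natCast_dvd.1 (by push_cast; exact hcon))
      · intro h
        have h0 : D ≠ 0 := by
          intro hD0
          apply h
          rw [hD0]
          exact dvd_zero _
        have h1 : p ^ n ∣ D.natAbs := Int.natCast_dvd.1 (by push_cast; exact hdvdD)
        have h2 : ¬ p ^ (n + 1) ∣ D.natAbs := fun hc => h (by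
          have h8 := Int.natCast_dvd.2 hc
          push_cast at h8
          exact h8)
        have h3 : padicValNat p D.natAbs = n :=
          (padicValNat_eq_iff' hp (Int.natAbs_ne_zero.2 h0)).2 ⟨h1, h2⟩
        simp only [ordZ, if_neg h0, padicValInt, h3, hn]
    rw [hOZ, hOE]
    exact not_congr hbr
end

section
/- Let p be a prime and λ a partition of n > 0 such that the degree of the irreducible representation ρ^λ of S_n is prime to p. Then λ has a cell whose removal of a 1-hook (a corner cell) yields a partition μ of n−1 such that the degree of ρ^μ is also prime to p. -/
/-- The hook length of a cell `c = (i, j)` of a Young diagram. -/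
def hookLen (Y : YoungDiagram) (c : ℕ × ℕ) : ℕ :=
  (Y.rowLen c.1 - c.2) + (Y.colLen c.2 - c.1) - 1

/-- The degree of the irreducible representation of `S_n` indexed by `Y`
(`n = Y.card`), given by the hook-length formula. -/
def degIrrep (Y : YoungDiagram) : ℕ :=
  Nat.factorial Y.card / ∏ c ∈ Y.cells, hookLen Y c

/-!
By the branching rule `deg ρ^λ = ∑_μ deg ρ^μ`, over the diagrams `μ` obtained by removing a
corner, `p` cannot divide every `deg ρ^μ` if it does not divide `deg ρ^λ`.

As `deg ρ^λ = n! / H(λ)` with `H` the product of the hook lengths, the branching rule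
amounts to `∑_μ H(λ) / H(μ) = n`. With `m` rows and β-numbers `β_i = λ_i + m - 1 - i`,
Frobenius' formula `H(λ) · ∏_{i<k} (β_i - β_k) = ∏_i β_i!` holds row by row: the hook lengths
of row `i` and the gaps `β_i - β_k`, `k > i`, are exactly `1, …, β_i`. Removing the corner at
the end of row `r` replaces `β_r` by `β_r - 1`, so
`H(λ) / H(μ) = β_r ∏_{k ≠ r} (β_r - 1 - β_k) / (β_r - β_k)`; this expression vanishes on rows
without a corner, and its sum over all rows is `∑ β_i - C(m, 2) = n` by Lagrange
interpolation. Integrality of `n! / H(λ)` follows from the same identity by induction on `n`.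
-/

open Finset Polynomial
open scoped Nat

lemma prod_factorial_update_pred_mul {ι : Type*} [DecidableEq ι] {s : Finset ι} {f : ι → ℕ}
    {r : ι} (hr : r ∈ s) (hf : f r ≠ 0) :
    (∏ i ∈ s, (Function.update f r (f r - 1) i)!) * f r = ∏ i ∈ s, (f i)! := by
  rw [← mul_prod_erase _ _ hr, ← mul_prod_erase s (fun i => (f i)!) hr, Function.update_self,
    prod_congr rfl fun i hi => by rw [Function.update_of_ne (mem_erase.mp hi).1],
    ← Nat.mul_factorial_pred hf]
  ring

section DiffProd

variable {K : Type*} [CommRing K]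

def diffProd (m : ℕ) (u : ℕ → K) : K := ∏ k ∈ range m, ∏ j ∈ range k, (u j - u k)

lemma diffProd_succ (m : ℕ) (u : ℕ → K) :
    diffProd (m + 1) u = diffProd m u * ∏ j ∈ range m, (u j - u m) :=
  prod_range_succ _ m

lemma diffProd_congr {m : ℕ} {u w : ℕ → K} (h : ∀ i < m, u i = w i) :
    diffProd m u = diffProd m w :=
  prod_congr rfl fun k hk => prod_congr rfl fun j hj => by
    rw [h j ((mem_range.mp hj).trans (mem_range.mp hk)), h k (mem_range.mp hk)]

theorem diffProd_update_mul {m r : ℕ} (hr : r < m) (u : ℕ → K) (x : K) :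
    diffProd m (Function.update u r x) * ∏ k ∈ (range m).erase r, (u r - u k) =
      diffProd m u * ∏ k ∈ (range m).erase r, (x - u k) := by
  induction m with
  | zero => exact absurd hr (Nat.not_lt_zero r)
  | succ m ih =>
    set u' := Function.update u r x
    have hur : u' r = x := Function.update_self ..
    have hu' : ∀ j ≠ r, u' j = u j := fun j hj => Function.update_of_ne hj ..
    rcases Nat.lt_succ_iff_lt_or_eq.mp hr with hr | rfl
    · have hr' := mem_range.mpr hr
      have herase : ∀ f : ℕ → K, ∏ k ∈ (range (m + 1)).erase r, f k =
          f m * ∏ k ∈ (range m).erase r, f k := fun f => by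
        rw [range_add_one, erase_insert_of_ne (by omega), prod_insert (by simp)]
      have hlast : ∏ j ∈ range m, (u' j - u' m) =
          (x - u m) * ∏ j ∈ (range m).erase r, (u j - u m) := by
        rw [← mul_prod_erase _ _ hr', hu' m (by omega), hur]
        exact congrArg _ (prod_congr rfl fun j hj => by rw [hu' j (mem_erase.mp hj).1])
      rw [diffProd_succ, diffProd_succ, herase, herase, hlast, ← mul_prod_erase _ _ hr']
      linear_combination
        (x - u m) * (u r - u m) * (∏ j ∈ (range m).erase r, (u j - u m)) * ih hr
    · have hlast : ∏ j ∈ range r, (u' j - u' r) = ∏ j ∈ range r, (u j - x) :=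
        prod_congr rfl fun j hj => by rw [hu' j (mem_range.mp hj).ne, hur]
      rw [diffProd_succ, diffProd_succ, diffProd_congr fun i hi => hu' i hi.ne, hlast,
        range_add_one, erase_insert (by simp), mul_assoc, mul_assoc, ← prod_mul_distrib,
        ← prod_mul_distrib]
      exact congrArg _ (prod_congr rfl fun _ _ => by ring)

end DiffProd

lemma coeff_taylor_eq_sum {R : Type*} [CommSemiring R] (g : R[X]) (r : R) {k N : ℕ}
    (hN : g.natDegree - k < N) :
    (taylor r g).coeff k = ∑ n ∈ range N, ((n + k).choose k : R) * g.coeff (n + k) * r ^ n := by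
  rw [taylor_coeff, eval_eq_sum_range' ((natDegree_hasseDeriv_le g k).trans_lt hN)]
  exact sum_congr rfl fun n _ => by rw [hasseDeriv_coeff]

section ShiftedProduct

variable {R : Type*} [CommRing R] {g : R[X]}

lemma coeff_succ_mul_sub_X_mul_taylor (c : R) (k : ℕ) :
    ((X - C c) * g - X * taylor (-1) g).coeff (k + 1) =
      g.coeff k - c * g.coeff (k + 1) - (taylor (-1) g).coeff k := by
  simp only [sub_mul, coeff_sub, coeff_X_mul, coeff_C_mul]

/-- The coefficients of `X^(d+1)` and `X^d` cancel because
`g(X - 1) = X^d + (g_{d-1} - d) X^(d-1) + …` for `d = g.natDegree`. -/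
lemma degree_mul_sub_X_mul_taylor_lt (hg : g.Monic) (hd : 0 < g.natDegree) :
    ((X - C (g.natDegree : R)) * g - X * taylor (-1) g).degree < (g.natDegree : WithBot ℕ) := by
  have hzero : ∀ k, g.natDegree < k → g.coeff k = 0 ∧ (taylor (-1) g).coeff k = 0 :=
    fun k hk => ⟨coeff_eq_zero_of_natDegree_lt hk,
      coeff_eq_zero_of_natDegree_lt (by rwa [natDegree_taylor])⟩
  refine degree_lt_iff_coeff_zero _ _ |>.mpr fun k hk => ?_
  obtain ⟨k, rfl⟩ : ∃ j, k = j + 1 := ⟨k - 1, by omega⟩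
  rw [coeff_succ_mul_sub_X_mul_taylor]
  obtain hk | hk | hk : k + 1 = g.natDegree ∨ k = g.natDegree ∨ g.natDegree < k := by omega
  · have htop : g.coeff (k + 1) = 1 := hk ▸ hg.coeff_natDegree
    rw [coeff_taylor_eq_sum g _ (N := 2) (by omega)]
    simp [sum_range_succ, htop, ← hk, add_comm 1, Nat.choose_succ_self_right]
    ring
  · rw [coeff_taylor_eq_sum g _ (N := 1) (by omega), (hzero (k + 1) (by omega)).1, hk]
    simp [hg.coeff_natDegree]
  · rw [(hzero _ hk).1, (hzero _ hk).2, (hzero (k + 1) (by omega)).1]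
    ring

lemma coeff_mul_sub_X_mul_taylor {M : ℕ} (hg : g.Monic) (hd : g.natDegree = M + 2) :
    ((X - C (g.natDegree : R)) * g - X * taylor (-1) g).coeff (M + 1) =
      -g.nextCoeff - (M + 2).choose 2 := by
  rw [coeff_succ_mul_sub_X_mul_taylor, coeff_taylor_eq_sum g _ (N := 3) (by omega),
    nextCoeff_of_natDegree_pos (by omega), hd]
  have htop : g.coeff (M + 2) = 1 := hd ▸ hg.coeff_natDegree
  simp [sum_range_succ, htop, add_comm 1, add_comm 2, Nat.choose_succ_self_right]
  rw [Nat.choose_symm_add]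
  ring

end ShiftedProduct

theorem sum_mul_prod_sub_one_sub_div_prod_sub {ι K : Type*} [DecidableEq ι] [Field K]
    {s : Finset ι} {v : ι → K} (hvs : Set.InjOn v s) :
    ∑ i ∈ s, v i * (∏ j ∈ s.erase i, (v i - 1 - v j)) / ∏ j ∈ s.erase i, (v i - v j) =
      ∑ i ∈ s, v i - ((#s).choose 2 : K) := by
  obtain hs | ⟨M, hM⟩ : #s < 2 ∨ ∃ M, #s = M + 2 :=
    (lt_or_ge _ _).imp_right fun h => ⟨#s - 2, by omega⟩
  · interval_cases h : #s
    · simp [card_eq_zero.mp h]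
    · obtain ⟨a, rfl⟩ := card_eq_one.mp h
      simp
  have hdeg : (Lagrange.nodal s v).natDegree = M + 2 := by rw [Lagrange.natDegree_nodal, hM]
  -- `P` is `-X g(X - 1)` reduced modulo `g = ∏ j ∈ s, (X - v j)`.
  set P := (X - C ((Lagrange.nodal s v).natDegree : K)) * Lagrange.nodal s v -
    X * taylor (-1) (Lagrange.nodal s v)
  have hP_eval : ∀ i ∈ s, P.eval (v i) = v i * ∏ j ∈ s.erase i, (v i - 1 - v j) :=
    fun i hi => by
      simp only [P, eval_sub, eval_mul, eval_X, eval_C, taylor_eval,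
        Lagrange.eval_nodal_at_node hi, Lagrange.eval_nodal, ← mul_prod_erase s _ hi,
        ← sub_eq_add_neg]
      ring
  have hP_degree : P.degree < #s :=
    (degree_mul_sub_X_mul_taylor_lt Lagrange.nodal_monic (by omega)).trans_eq
      (by rw [Lagrange.natDegree_nodal])
  calc ∑ i ∈ s, v i * (∏ j ∈ s.erase i, (v i - 1 - v j)) / ∏ j ∈ s.erase i, (v i - v j)
      = ∑ i ∈ s, P.eval (v i) / ∏ j ∈ s.erase i, (v i - v j) :=
        sum_congr rfl fun i hi => by rw [hP_eval i hi]
    _ = P.coeff (#s - 1) := (Lagrange.coeff_eq_sum hvs hP_degree).symm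
    _ = ∑ i ∈ s, v i - ((#s).choose 2 : K) := by
        rw [hM, show M + 2 - 1 = M + 1 from rfl,
          coeff_mul_sub_X_mul_taylor Lagrange.nodal_monic hdeg, Lagrange.nodal_eq,
          prod_X_sub_C_nextCoeff]
        ring

namespace YoungDiagram

variable {Y : YoungDiagram}

lemma hookLen_pos {c : ℕ × ℕ} (hc : c ∈ Y) : 0 < hookLen Y c := by
  obtain ⟨i, j⟩ := c
  have := mem_iff_lt_rowLen.mp hc
  have := mem_iff_lt_colLen.mp hc
  unfold hookLen
  dsimp only
  omega

lemma mem_iff_lt_and_lt_rowLen {m : ℕ} (hm : Y.colLen 0 ≤ m) {i j : ℕ} :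
    (i, j) ∈ Y ↔ i < m ∧ j < Y.rowLen i := by
  refine ⟨fun h => ⟨?_, mem_iff_lt_rowLen.mp h⟩, fun h => mem_iff_lt_rowLen.mpr h.2⟩
  have := Y.colLen_anti 0 j j.zero_le
  have := mem_iff_lt_colLen.mp h
  omega

lemma prod_cells_eq_prod_rows {M : Type*} [CommMonoid M] {m : ℕ} (hm : Y.colLen 0 ≤ m)
    (f : ℕ × ℕ → M) :
    ∏ c ∈ Y.cells, f c = ∏ i ∈ range m, ∏ j ∈ range (Y.rowLen i), f (i, j) :=
  prod_finset_product _ _ _ fun ⟨i, j⟩ => by simp [mem_iff_lt_and_lt_rowLen hm]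

lemma card_eq_sum_rowLen {m : ℕ} (hm : Y.colLen 0 ≤ m) :
    Y.card = ∑ i ∈ range m, Y.rowLen i := by
  rw [YoungDiagram.card, card_eq_sum_ones,
    sum_finset_product _ (range m) (fun i => range (Y.rowLen i)) fun ⟨i, j⟩ => by
      simp [mem_iff_lt_and_lt_rowLen hm]]
  simp

lemma colLen_le_of_cells_subset {Z : YoungDiagram} (h : Z.cells ⊆ Y.cells) (j : ℕ) :
    Z.colLen j ≤ Y.colLen j := by
  by_contra! hlt
  have := mem_iff_lt_colLen.mp
    ((mem_cells _).mp (h ((mem_cells _).mpr (mem_iff_lt_colLen.mpr hlt))))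
  omega

lemma rowLen_eq_of_forall_mem_iff {i a : ℕ} (h : ∀ j, (i, j) ∈ Y ↔ j < a) :
    Y.rowLen i = a :=
  eq_of_forall_lt_iff fun j => mem_iff_lt_rowLen.symm.trans (h j)

lemma hookLen_of_lt_rowLen {i j : ℕ} (hj : j < Y.rowLen i) :
    hookLen Y (i, j) = Y.rowLen i - j - 1 + Y.colLen j - i := by
  have := mem_iff_lt_colLen.mp (mem_iff_lt_rowLen.mpr hj)
  unfold hookLen
  dsimp only
  omega

lemma injOn_hookLen_row (i : ℕ) :
    Set.InjOn (fun j => hookLen Y (i, j)) (range (Y.rowLen i)) := by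
  intro j hj j' hj' h
  simp only [coe_range, Set.mem_Iio] at hj hj'
  have := Y.colLen_anti j j'
  have := Y.colLen_anti j' j
  have := mem_iff_lt_colLen.mp (mem_iff_lt_rowLen.mpr hj)
  have := mem_iff_lt_colLen.mp (mem_iff_lt_rowLen.mpr hj')
  simp only [hookLen_of_lt_rowLen hj, hookLen_of_lt_rowLen hj'] at h
  omega

def hookProd (Y : YoungDiagram) : ℕ := ∏ c ∈ Y.cells, hookLen Y c

lemma hookProd_pos (Y : YoungDiagram) : 0 < Y.hookProd :=
  prod_pos fun _ hc => hookLen_pos ((mem_cells _).mp hc)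

/-- The `i`-th β-number of `Y` viewed as a diagram with `m` rows (only `i < m` is meaningful);
for `i < Y.colLen 0 = m` it is the hook length of the cell `(i, 0)`. -/
def betaNum (Y : YoungDiagram) (m i : ℕ) : ℕ := Y.rowLen i + (m - 1 - i)

lemma betaNum_lt_betaNum {m j k : ℕ} (hjk : j < k) (hk : k < m) :
    Y.betaNum m k < Y.betaNum m j := by
  have := Y.rowLen_anti j k hjk.le
  unfold betaNum
  omega

lemma betaNum_injOn (m : ℕ) : Set.InjOn (fun i => (Y.betaNum m i : ℚ)) (range m) := by
  rw [coe_range]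
  exact Nat.cast_injective.comp_injOn fun j hj k hk h => by
    by_contra hne
    rcases lt_or_gt_of_ne hne with hlt | hlt
    · exact (betaNum_lt_betaNum hlt hk).ne' h
    · exact (betaNum_lt_betaNum hlt hj).ne h

lemma sum_betaNum {m : ℕ} (hm : Y.colLen 0 ≤ m) :
    ∑ i ∈ range m, Y.betaNum m i = Y.card + m.choose 2 := by
  rw [card_eq_sum_rowLen hm, Nat.choose_two_right, ← sum_range_id,
    ← sum_range_reflect (fun i => i) m, ← sum_add_distrib]
  rfl

lemma hookLen_le_betaNum {m i j : ℕ} (hm : Y.colLen 0 ≤ m) (hj : j < Y.rowLen i) :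
    hookLen Y (i, j) ≤ Y.betaNum m i := by
  have := (Y.colLen_anti 0 j j.zero_le).trans hm
  have := mem_iff_lt_colLen.mp (mem_iff_lt_rowLen.mpr hj)
  rw [hookLen_of_lt_rowLen hj, betaNum]
  omega

/-- Equality would mean `colLen j + rowLen k = j + k + 1`, which fails both when `(k, j) ∈ Y`
and when it is not. -/
lemma hookLen_ne_betaNum_sub {m i j k : ℕ} (hj : j < Y.rowLen i) (hik : i < k) (hk : k < m) :
    hookLen Y (i, j) ≠ Y.betaNum m i - Y.betaNum m k := by
  have hcell : k < Y.colLen j ↔ j < Y.rowLen k := mem_iff_lt_colLen.symm.trans mem_iff_lt_rowLen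
  have := mem_iff_lt_colLen.mp (mem_iff_lt_rowLen.mpr hj)
  have := Y.rowLen_anti i k hik.le
  rw [hookLen_of_lt_rowLen hj, betaNum, betaNum]
  omega

/-- The hook lengths in row `i` and the gaps `β i - β k`, `i < k < m`, are together exactly
`1, …, β i`. -/
theorem prod_hookLen_row_mul_prod_betaNum_sub {m i : ℕ} (hm : Y.colLen 0 ≤ m) :
    (∏ j ∈ range (Y.rowLen i), hookLen Y (i, j)) *
      ∏ k ∈ Ioo i m, (Y.betaNum m i - Y.betaNum m k) = (Y.betaNum m i)! := by
  set β := Y.betaNum m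
  have hβ : ∀ k ∈ Ioo i m, β k < β i := fun k hk =>
    betaNum_lt_betaNum (mem_Ioo.mp hk).1 (mem_Ioo.mp hk).2
  set hooks := (range (Y.rowLen i)).image fun j => hookLen Y (i, j)
  set gaps := (Ioo i m).image fun k => β i - β k
  have hinj_gaps : Set.InjOn (fun k => β i - β k) (Ioo i m) := by
    refine StrictMonoOn.injOn fun k hk k' hk' hlt => ?_
    have : β k' < β k := betaNum_lt_betaNum hlt (mem_Ioo.mp hk').2
    have := hβ k hk
    omega
  have hdisj : Disjoint hooks gaps := by
    refine disjoint_left.mpr fun x hx hx' => ?_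
    obtain ⟨j, hj, rfl⟩ := mem_image.mp hx
    obtain ⟨k, hk, he⟩ := mem_image.mp hx'
    exact hookLen_ne_betaNum_sub (mem_range.mp hj) (mem_Ioo.mp hk).1 (mem_Ioo.mp hk).2 he.symm
  have hunion : hooks ∪ gaps = Ico 1 (β i + 1) := by
    refine eq_of_subset_of_card_le (union_subset ?_ ?_) ?_
    · intro x hx
      obtain ⟨j, hj, rfl⟩ := mem_image.mp hx
      have hj := mem_range.mp hj
      exact mem_Ico.mpr ⟨hookLen_pos (mem_iff_lt_rowLen.mpr hj),
        Nat.lt_succ_of_le (hookLen_le_betaNum hm hj)⟩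
    · intro x hx
      obtain ⟨k, hk, rfl⟩ := mem_image.mp hx
      have := hβ k hk
      rw [mem_Ico]
      omega
    · rw [card_union_of_disjoint hdisj, card_image_of_injOn (injOn_hookLen_row i),
        card_image_of_injOn hinj_gaps, card_range, Nat.card_Ioo, Nat.card_Ico]
      simp only [β, betaNum]
      omega
  calc (∏ j ∈ range (Y.rowLen i), hookLen Y (i, j)) * ∏ k ∈ Ioo i m, (β i - β k)
      = (∏ x ∈ hooks, x) * ∏ x ∈ gaps, x := by
        rw [prod_image (injOn_hookLen_row i), prod_image hinj_gaps]
    _ = ∏ x ∈ Ico 1 (β i + 1), x := by rw [← prod_union hdisj, hunion]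
    _ = (β i)! := prod_Ico_id_eq_factorial _

theorem hookProd_mul_prod_betaNum_sub {m : ℕ} (hm : Y.colLen 0 ≤ m) :
    Y.hookProd * ∏ i ∈ range m, ∏ k ∈ Ioo i m, (Y.betaNum m i - Y.betaNum m k) =
      ∏ i ∈ range m, (Y.betaNum m i)! := by
  rw [hookProd, prod_cells_eq_prod_rows hm, ← prod_mul_distrib]
  exact prod_congr rfl fun _ _ => prod_hookLen_row_mul_prod_betaNum_sub hm

theorem hookProd_mul_diffProd {m : ℕ} (hm : Y.colLen 0 ≤ m) :
    (Y.hookProd : ℚ) * diffProd m (fun i => (Y.betaNum m i : ℚ)) =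
      ∏ i ∈ range m, ((Y.betaNum m i)! : ℚ) := by
  have hcast : diffProd m (fun i => (Y.betaNum m i : ℚ)) =
      ((∏ i ∈ range m, ∏ k ∈ Ioo i m, (Y.betaNum m i - Y.betaNum m k) : ℕ) : ℚ) := by
    rw [diffProd, prod_comm' (t' := range m) (s' := fun j => Ioo j m) fun k j => by simp; omega]
    push_cast
    refine prod_congr rfl fun i _ => prod_congr rfl fun k hk => ?_
    rw [Nat.cast_sub (betaNum_lt_betaNum (mem_Ioo.mp hk).1 (mem_Ioo.mp hk).2).le]
  rw [hcast]
  exact_mod_cast hookProd_mul_prod_betaNum_sub hm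

/-- `Y` with the last cell of row `r` removed when that cell is a corner, and `Y` itself
otherwise. -/
def removeCorner (Y : YoungDiagram) (r : ℕ) : YoungDiagram where
  cells := if Y.rowLen (r + 1) < Y.rowLen r then Y.cells.erase (r, Y.rowLen r - 1) else Y.cells
  isLowerSet := by
    split_ifs with hr
    · rw [coe_erase]
      refine Y.isLowerSet.erase fun ⟨i, j⟩ hc ⟨hi, hj⟩ => ?_
      have := mem_iff_lt_rowLen.mp ((mem_cells _).mp hc)
      have := Y.rowLen_anti r i hi
      have := Y.rowLen_anti (r + 1) i
      simp only at hi hj ⊢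
      ext <;> simp only <;> omega
    · exact Y.isLowerSet

def cornerRows (Y : YoungDiagram) : Finset ℕ :=
  (range (Y.colLen 0)).filter fun r => Y.rowLen (r + 1) < Y.rowLen r

lemma mem_cornerRows {r : ℕ} : r ∈ Y.cornerRows ↔ Y.rowLen (r + 1) < Y.rowLen r := by
  refine ⟨fun h => (mem_filter.mp h).2, fun h => mem_filter.mpr ⟨mem_range.mpr ?_, h⟩⟩
  exact mem_iff_lt_colLen.mp (mem_iff_lt_rowLen.mpr (by omega : 0 < Y.rowLen r))

lemma removeCorner_cells {r : ℕ} (hr : Y.rowLen (r + 1) < Y.rowLen r) :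
    (Y.removeCorner r).cells = Y.cells.erase (r, Y.rowLen r - 1) :=
  if_pos hr

lemma removeCorner_cells_subset {r : ℕ} (hr : Y.rowLen (r + 1) < Y.rowLen r) :
    (Y.removeCorner r).cells ⊆ Y.cells :=
  removeCorner_cells hr ▸ erase_subset _ _

lemma card_removeCorner {r : ℕ} (hr : Y.rowLen (r + 1) < Y.rowLen r) :
    (Y.removeCorner r).card = Y.card - 1 := by
  rw [YoungDiagram.card, removeCorner_cells hr, card_erase_of_mem]
  exact (mem_cells _).mpr (mem_iff_lt_rowLen.mpr (by omega))

lemma rowLen_removeCorner {r : ℕ} (hr : Y.rowLen (r + 1) < Y.rowLen r) (i : ℕ) :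
    (Y.removeCorner r).rowLen i = if i = r then Y.rowLen r - 1 else Y.rowLen i := by
  refine rowLen_eq_of_forall_mem_iff fun j => ?_
  rw [← mem_cells, removeCorner_cells hr, mem_erase, mem_cells, mem_iff_lt_rowLen]
  split_ifs with hi
  · subst hi
    simp only [ne_eq, Prod.mk.injEq, true_and]
    omega
  · simp [hi]

lemma betaNum_removeCorner {r : ℕ} (hr : Y.rowLen (r + 1) < Y.rowLen r) (m : ℕ) :
    (Y.removeCorner r).betaNum m = Function.update (Y.betaNum m) r (Y.betaNum m r - 1) := by
  funext i
  rcases eq_or_ne i r with rfl | hi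
  · rw [Function.update_self, betaNum, betaNum, rowLen_removeCorner hr, if_pos rfl]
    omega
  · rw [Function.update_of_ne hi, betaNum, betaNum, rowLen_removeCorner hr, if_neg hi]

theorem hookProd_div_hookProd_removeCorner {m r : ℕ} (hm : Y.colLen 0 ≤ m)
    (hr : Y.rowLen (r + 1) < Y.rowLen r) :
    (Y.hookProd : ℚ) / (Y.removeCorner r).hookProd =
      (Y.betaNum m r : ℚ) *
          (∏ k ∈ (range m).erase r, ((Y.betaNum m r : ℚ) - 1 - Y.betaNum m k)) /
        ∏ k ∈ (range m).erase r, ((Y.betaNum m r : ℚ) - Y.betaNum m k) := by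
  set β := Y.betaNum m
  set b : ℕ → ℚ := fun i => (β i : ℚ)
  have hrm : r < m := (mem_range.mp (mem_filter.mp (mem_cornerRows.mpr hr)).1).trans_le hm
  have hβr : 1 ≤ β r := by simp only [β, betaNum]; omega
  have hY := hookProd_mul_diffProd hm
  have hZ := hookProd_mul_diffProd (Y := Y.removeCorner r)
    ((colLen_le_of_cells_subset (removeCorner_cells_subset hr) 0).trans hm)
  have hb' : (fun i => ((Function.update β r (β r - 1) i : ℕ) : ℚ)) =
      Function.update b r (b r - 1) := by
    funext i
    rcases eq_or_ne i r with rfl | hi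
    · simp [b, Nat.cast_sub hβr]
    · simp [b, hi]
  rw [betaNum_removeCorner hr, hb'] at hZ
  have hfact : (∏ i ∈ range m, ((Function.update β r (β r - 1) i)! : ℚ)) * b r =
      ∏ i ∈ range m, ((β i)! : ℚ) := by
    simp only [b]
    exact_mod_cast prod_factorial_update_pred_mul (mem_range.mpr hrm) (by omega)
  have hupd := diffProd_update_mul hrm b (b r - 1)
  have hD : diffProd m b ≠ 0 :=
    right_ne_zero_of_mul (hY ▸ prod_ne_zero_iff.mpr fun i _ => by positivity)
  have hE : ∏ k ∈ (range m).erase r, (b r - b k) ≠ 0 :=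
    prod_ne_zero_iff.mpr fun k hk => sub_ne_zero.mpr fun h =>
      (mem_erase.mp hk).1 (betaNum_injOn m (mem_erase.mp hk).2 (mem_range.mpr hrm) h.symm)
  have hHZ : ((Y.removeCorner r).hookProd : ℚ) ≠ 0 := by
    have := hookProd_pos (Y.removeCorner r)
    positivity
  rw [div_eq_div_iff hHZ hE]
  refine mul_left_cancel₀ hD ?_
  linear_combination (∏ k ∈ (range m).erase r, (b r - b k)) * hY
    + b r * ((Y.removeCorner r).hookProd : ℚ) * hupd
    - b r * (∏ k ∈ (range m).erase r, (b r - b k)) * hZ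
    - (∏ k ∈ (range m).erase r, (b r - b k)) * hfact

/-- A row that does not end in a corner has the same length as the next one, so the β-numbers of
the two rows differ by one. -/
lemma prod_betaNum_sub_one_sub_eq_zero {m r : ℕ} (hm : Y.colLen 0 ≤ m) (hr : r < Y.colLen 0)
    (hnc : ¬ Y.rowLen (r + 1) < Y.rowLen r) :
    ∏ k ∈ (range m).erase r, ((Y.betaNum m r : ℚ) - 1 - Y.betaNum m k) = 0 := by
  have hpos : 0 < Y.rowLen r := mem_iff_lt_rowLen.mp (mem_iff_lt_colLen.mpr hr)
  have heq : Y.rowLen (r + 1) = Y.rowLen r :=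
    le_antisymm (Y.rowLen_anti r (r + 1) r.le_succ) (not_lt.mp hnc)
  have hr1 : r + 1 < Y.colLen 0 := mem_iff_lt_colLen.mp (mem_iff_lt_rowLen.mpr (heq ▸ hpos))
  refine prod_eq_zero (i := r + 1) (mem_erase.mpr ⟨r.succ_ne_self, mem_range.mpr (by omega)⟩) ?_
  have : Y.betaNum m r = Y.betaNum m (r + 1) + 1 := by
    simp only [betaNum]
    omega
  rw [this]
  push_cast
  ring

theorem sum_hookProd_div_hookProd_removeCorner (Y : YoungDiagram) :
    ∑ r ∈ Y.cornerRows, (Y.hookProd : ℚ) / (Y.removeCorner r).hookProd = Y.card := by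
  rw [sum_congr rfl fun r hr => hookProd_div_hookProd_removeCorner le_rfl (mem_cornerRows.mp hr),
    sum_subset (show Y.cornerRows ⊆ range (Y.colLen 0) from filter_subset _ _) fun r hr hnc => ?_,
    sum_mul_prod_sub_one_sub_div_prod_sub (betaNum_injOn _), card_range]
  · rw [← Nat.cast_sum, sum_betaNum le_rfl]
    push_cast
    ring
  · rw [prod_betaNum_sub_one_sub_eq_zero le_rfl (mem_range.mp hr)
      fun h => hnc (mem_cornerRows.mpr h), mul_zero, zero_div]

lemma factorial_eq_hookProd_mul_sum (hn : 0 < Y.card)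
    (hdvd : ∀ r ∈ Y.cornerRows, (Y.removeCorner r).hookProd ∣ (Y.card - 1)!) :
    Y.card ! = Y.hookProd * ∑ r ∈ Y.cornerRows, degIrrep (Y.removeCorner r) := by
  have hdeg : ∀ r ∈ Y.cornerRows, (degIrrep (Y.removeCorner r) : ℚ) =
      ((Y.card - 1)! : ℚ) / (Y.removeCorner r).hookProd := fun r hr => by
    rw [degIrrep, ← hookProd, card_removeCorner (mem_cornerRows.mp hr),
      Nat.cast_div (hdvd r hr) (by have := hookProd_pos (Y.removeCorner r); positivity)]
  suffices h : (Y.card ! : ℚ) =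
      Y.hookProd * ∑ r ∈ Y.cornerRows, (degIrrep (Y.removeCorner r) : ℚ) by
    exact_mod_cast h
  rw [sum_congr rfl hdeg, mul_sum, ← Nat.mul_factorial_pred hn.ne', Nat.cast_mul,
    ← sum_hookProd_div_hookProd_removeCorner Y, sum_mul]
  exact sum_congr rfl fun r _ => by ring

theorem hookProd_dvd_factorial (Y : YoungDiagram) : Y.hookProd ∣ Y.card ! := by
  induction hn : Y.card using Nat.strong_induction_on generalizing Y with
  | _ n ih =>
    rcases n.eq_zero_or_pos with rfl | hpos
    · simp [hookProd, card_eq_zero.mp hn]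
    · subst hn
      refine Dvd.intro _ (factorial_eq_hookProd_mul_sum hpos fun r hr => ?_).symm
      have hcard := card_removeCorner (mem_cornerRows.mp hr)
      exact hcard ▸ ih _ (by omega) _ rfl

theorem degIrrep_eq_sum_degIrrep_removeCorner (hn : 0 < Y.card) :
    degIrrep Y = ∑ r ∈ Y.cornerRows, degIrrep (Y.removeCorner r) := by
  rw [degIrrep, ← hookProd, factorial_eq_hookProd_mul_sum hn fun r hr => ?_,
    Nat.mul_div_cancel_left _ (hookProd_pos Y)]
  exact card_removeCorner (mem_cornerRows.mp hr) ▸ hookProd_dvd_factorial _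

end YoungDiagram

theorem stmt12_general (p : ℕ) (Y : YoungDiagram) (hn : 0 < Y.card)
    (hdeg : ¬ p ∣ degIrrep Y) :
    ∃ Z : YoungDiagram, Z.cells ⊆ Y.cells ∧ Z.card = Y.card - 1 ∧
      ¬ p ∣ degIrrep Z := by
  obtain ⟨r, hr, hndvd⟩ : ∃ r ∈ Y.cornerRows, ¬ p ∣ degIrrep (Y.removeCorner r) := by
    by_contra! h
    exact hdeg (YoungDiagram.degIrrep_eq_sum_degIrrep_removeCorner hn ▸ dvd_sum h)
  have hcorner := YoungDiagram.mem_cornerRows.mp hr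
  exact ⟨Y.removeCorner r, YoungDiagram.removeCorner_cells_subset hcorner,
    YoungDiagram.card_removeCorner hcorner, hndvd⟩

/-- If `p` is prime and the degree of `ρ^λ` is prime to `p`, then some corner
cell of `λ` can be removed to give `μ ⊆ λ` with `|μ| = |λ| - 1` whose degree is
also prime to `p`. -/
theorem stmt12 (p : ℕ) (hp : p.Prime) (Y : YoungDiagram) (hn : 0 < Y.card)
    (hdeg : ¬ p ∣ degIrrep Y) :
    ∃ Z : YoungDiagram, Z.cells ⊆ Y.cells ∧ Z.card = Y.card - 1 ∧
      ¬ p ∣ degIrrep Z :=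
  stmt12_general p Y hn hdeg
end
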